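/- For any interpretation ω over domain [n+m], the weight satisfies w(ω↓[n]) · w(ω↓[n+1..n+m]) · ∏_{k∈[d]} (w_k^min)^{C(n+m,k)−C(n,k)−C(m,k)} ≤ w(ω) ≤ w(ω↓[n]) · w(ω↓[n+1..n+m]) · ∏_{k∈[d]} (w_k^max)^{C(n+m,k)−C(n,k)−C(m,k)}, where C(·,·) denotes binomial coefficients. -/

import Mathlib

open scoped BigOperators

structure Vocab where
  Rel : Type
  [fintypeRel : Fintype Rel]
  [decEqRel : DecidableEq Rel]
  ar : Rel → ℕ

attribute [instance] Vocab.fintypeRel Vocab.decEqRel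

def Interp (V : Vocab) (D : Type) : Type :=
  (r : V.Rel) → (Fin (V.ar r) → D) → Bool

noncomputable instance (V : Vocab) (D : Type) [Fintype D] [DecidableEq D] :
    Fintype (Interp V D) := by
  unfold Interp; infer_instance

noncomputable instance (V : Vocab) (D : Type) : DecidableEq (Interp V D) :=
  Classical.decEq _

def restrict {V : Vocab} {D E : Type} (f : E → D) (ω : Interp V D) : Interp V E :=
  fun r t => ω r (f ∘ t)

structure Formula (V : Vocab) where
  arity : ℕ
  sat : Interp V (Fin arity) → Bool

structure MLN (V : Vocab) where
  formulas : List (Formula V × ℝ)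

noncomputable def nGround {V : Vocab} {D : Type} [Fintype D] [DecidableEq D]
    (φ : Formula V) (ω : Interp V D) : ℕ :=
  Fintype.card {c : Fin φ.arity ↪ D // φ.sat (restrict (fun i => c i) ω) = true}

noncomputable def weight {V : Vocab} {D : Type} [Fintype D] [DecidableEq D]
    (Φ : MLN V) (ω : Interp V D) : ℝ :=
  Real.exp ((Φ.formulas.map (fun p => p.2 * (nGround p.1 ω : ℝ))).sum)

noncomputable def kweight {V : Vocab} (Φ : MLN V) (k : ℕ) (ν : Interp V (Fin k)) : ℝ :=
  Real.exp (((Φ.formulas.filter (fun p => p.1.arity == k)).map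
      (fun p => p.2 * (nGround p.1 ν : ℝ))).sum)

noncomputable def downset {V : Vocab} {n k : ℕ} (ω : Interp V (Fin n))
    (s : Finset (Fin n)) (h : s.card = k) : Interp V (Fin k) :=
  restrict (fun i => ((s.orderIsoOfFin h i : Fin n))) ω

noncomputable def Zpart {V : Vocab} (Φ : MLN V) (N : ℕ) : ℝ :=
  ∑ ω : Interp V (Fin N), weight Φ ω

noncomputable def wmax {V : Vocab} (Φ : MLN V) (k : ℕ) : ℝ :=
  ⨆ ν : Interp V (Fin k), kweight Φ k ν

noncomputable def wmin {V : Vocab} (Φ : MLN V) (k : ℕ) : ℝ :=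
  ⨅ ν : Interp V (Fin k), kweight Φ k ν

def exponent (n m k : ℕ) : ℕ := (n + m).choose k - n.choose k - m.choose k

noncomputable def Mmax {V : Vocab} (Φ : MLN V) (d n m : ℕ) : ℝ :=
  ∏ k ∈ Finset.Icc 1 d, (wmax Φ k) ^ (exponent n m k)

noncomputable def Mmin {V : Vocab} (Φ : MLN V) (d n m : ℕ) : ℝ :=
  ∏ k ∈ Finset.Icc 1 d, (wmin Φ k) ^ (exponent n m k)

noncomputable def Pdist {V : Vocab} (Φ : MLN V) (N : ℕ) (ω : Interp V (Fin N)) : ℝ :=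
  weight Φ ω / Zpart Φ N

noncomputable def marg {V : Vocab} (Φ : MLN V) (n m : ℕ) (ω : Interp V (Fin n)) : ℝ :=
  ∑ ω' ∈ Finset.univ.filter
      (fun ω' : Interp V (Fin (n + m)) => restrict (Fin.castAdd m) ω' = ω),
    Pdist Φ (n + m) ω'

/-!
An injective grounding `Fin k ↪ [N]` of a formula of arity `k` has a `k`-element image `s`, and
the groundings with image `s` are exactly the groundings of `ω↓s` composed with the increasing
enumeration of `s`. Hence `w(ω) = ∏ₖ ∏_{|s| = k} w_k(ω↓s)`. Restriction along an order embedding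
commutes with `↓`, so the subsets inside `[n]` and inside the last `m` elements reassemble
`w(ω↓[n])` and `w(ω↓[n̄])`; each of the remaining `C(n+m,k) − C(n,k) − C(m,k)` crossing factors
lies between `w_k^min` and `w_k^max`.
-/

open Finset

theorem List.sum_map_eq_sum_filter_beq {α β M : Type*} [AddCommMonoid M] [BEq β] [LawfulBEq β]
    (L : List α) (key : α → β) (u : α → β → M) (S : Finset β) (hS : ∀ a ∈ L, key a ∈ S) :
    (L.map fun a => u a (key a)).sum =
      ∑ b ∈ S, ((L.filter fun a => key a == b).map fun a => u a b).sum := by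
  classical
  induction L with
  | nil => simp
  | cons a L ih =>
    have hcons : ∀ b, (((a :: L).filter fun x => key x == b).map fun x => u x b).sum =
        (if key a = b then u a b else 0) +
          ((L.filter fun x => key x == b).map fun x => u x b).sum :=
      fun b => by by_cases h : key a = b <;> simp [h]
    rw [sum_congr rfl fun b _ => hcons b, sum_add_distrib, sum_ite_eq, if_pos (hS a (by simp)),
      ← ih fun x hx => hS x (by simp [hx]), List.map_cons, List.sum_cons]

theorem List.sum_map_finset_sum {α ι M : Type*} [AddCommMonoid M] (L : List α) (T : Finset ι)
    (g : α → ι → M) :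
    (L.map fun a => ∑ i ∈ T, g a i).sum = ∑ i ∈ T, (L.map fun a => g a i).sum := by
  simpa using Multiset.sum_map_sum (m := (L : Multiset α)) (s := T) (f := g)

theorem card_filter_map_univ_eq {α : Type*} [LinearOrder α] [Fintype α] {k : ℕ}
    (P : (Fin k ↪ α) → Prop) [DecidablePred P] (s : Finset α) (h : s.card = k) :
    #{c | P c ∧ univ.map c = s} =
      #{σ : Fin k ↪ Fin k | P (σ.trans (s.orderEmbOfFin h).toEmbedding)} := by
  set e := s.orderIsoOfFin h
  symm
  refine card_bij (fun σ _ => σ.trans (s.orderEmbOfFin h).toEmbedding) ?_ ?_ ?_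
  · intro σ hσ
    simp only [mem_filter, mem_univ, true_and] at hσ ⊢
    refine ⟨hσ, ?_⟩
    rw [← map_map, map_univ_of_surjective (Finite.injective_iff_surjective.1 σ.injective),
      map_orderEmbOfFin_univ]
  · intro σ _ τ _ hστ
    ext1 i
    exact (s.orderEmbOfFin h).injective (DFunLike.congr_fun hστ i)
  · intro c hc
    simp only [mem_filter, mem_univ, true_and] at hc
    have hmem : ∀ i, c i ∈ s := fun i => hc.2 ▸ mem_map_of_mem c (mem_univ i)
    let σ : Fin k ↪ Fin k :=
      ⟨fun i => e.symm ⟨c i, hmem i⟩, fun i j hij => c.injective (by simpa using hij)⟩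
    have hσ : σ.trans (s.orderEmbOfFin h).toEmbedding = c := by
      ext1 i
      exact congrArg Subtype.val (e.apply_symm_apply _)
    exact ⟨σ, by simpa [hσ] using hc.1, hσ⟩

variable {V : Vocab}

section Subsets

variable {N : ℕ}

noncomputable def nGroundOn (φ : Formula V) (ω : Interp V (Fin N)) (s : Finset (Fin N)) : ℕ :=
  if h : s.card = φ.arity then nGround φ (downset ω s h) else 0

/-- The paper's `w_k(ω↓s)`, set to `1` when `s` does not have `k` elements. -/
noncomputable def subsetWeight (Φ : MLN V) (k : ℕ) (ω : Interp V (Fin N))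
    (s : Finset (Fin N)) : ℝ :=
  if h : s.card = k then kweight Φ k (downset ω s h) else 1

theorem nGround_eq_sum_nGroundOn (φ : Formula V) (ω : Interp V (Fin N)) :
    nGround φ ω = ∑ s ∈ powersetCard φ.arity univ, nGroundOn φ ω s := by
  classical
  rw [nGround, Fintype.card_subtype, card_eq_sum_card_fiberwise (f := fun c => univ.map c)
    (t := powersetCard φ.arity univ) (fun c _ => by simp)]
  refine sum_congr rfl fun s hs => ?_
  have h := (mem_powersetCard.1 hs).2
  rw [nGroundOn, dif_pos h, nGround, Fintype.card_subtype, filter_filter,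
    card_filter_map_univ_eq _ s h]
  rfl

theorem downset_restrict {j k : ℕ} (f : Fin j ↪o Fin N) (ω : Interp V (Fin N))
    (t : Finset (Fin j)) (h : t.card = k) :
    downset (restrict f ω) t h = downset ω (t.map f.toEmbedding) ((card_map _).trans h) := by
  have hf : (fun i => f (t.orderEmbOfFin h i)) =
      (t.map f.toEmbedding).orderEmbOfFin ((card_map _).trans h) :=
    orderEmbOfFin_unique _ (fun i => mem_map_of_mem _ (orderEmbOfFin_mem t h i))
      (f.strictMono.comp (t.orderEmbOfFin h).strictMono)
  unfold downset
  simp only [coe_orderIsoOfFin_apply, ← hf]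
  rfl

theorem subsetWeight_restrict (Φ : MLN V) (k : ℕ) {j : ℕ} (f : Fin j ↪o Fin N)
    (ω : Interp V (Fin N)) (t : Finset (Fin j)) :
    subsetWeight Φ k (restrict f ω) t = subsetWeight Φ k ω (t.map f.toEmbedding) := by
  by_cases h : t.card = k
  · rw [subsetWeight, subsetWeight, dif_pos h, dif_pos ((card_map _).trans h), downset_restrict]
  · rw [subsetWeight, subsetWeight, dif_neg h, dif_neg (by rwa [card_map])]

theorem subsetWeight_eq_exp (Φ : MLN V) (k : ℕ) (ω : Interp V (Fin N)) (s : Finset (Fin N)) :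
    subsetWeight Φ k ω s = Real.exp (((Φ.formulas.filter fun p => p.1.arity == k).map
      fun p => p.2 * (nGroundOn p.1 ω s : ℝ)).sum) := by
  have harity : ∀ p ∈ Φ.formulas.filter (fun p => p.1.arity == k), p.1.arity = k := fun p hp =>
    beq_iff_eq.1 (List.mem_filter.1 hp).2
  by_cases h : s.card = k
  · rw [subsetWeight, dif_pos h, kweight]
    congr 2
    refine List.map_congr_left fun p hp => ?_
    obtain rfl := harity p hp
    rw [nGroundOn, dif_pos h]
  · rw [subsetWeight, dif_neg h, eq_comm, Real.exp_eq_one_iff]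
    refine List.sum_eq_zero fun x hx => ?_
    obtain ⟨p, hp, rfl⟩ := List.mem_map.1 hx
    rw [nGroundOn, dif_neg (by rwa [harity p hp]), Nat.cast_zero, mul_zero]

theorem weight_eq_prod_subsetWeight (Φ : MLN V) (S : Finset ℕ)
    (hS : ∀ p ∈ Φ.formulas, p.1.arity ∈ S) (ω : Interp V (Fin N)) :
    weight Φ ω = ∏ k ∈ S, ∏ s ∈ powersetCard k univ, subsetWeight Φ k ω s := by
  simp only [subsetWeight_eq_exp, ← Real.exp_sum, weight]
  congr 1
  calc (Φ.formulas.map fun p => p.2 * (nGround p.1 ω : ℝ)).sum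
      = (Φ.formulas.map fun p =>
          ∑ s ∈ powersetCard p.1.arity univ, p.2 * (nGroundOn p.1 ω s : ℝ)).sum := by
        simp only [nGround_eq_sum_nGroundOn, Nat.cast_sum, mul_sum]
    _ = ∑ k ∈ S, ((Φ.formulas.filter fun p => p.1.arity == k).map fun p =>
          ∑ s ∈ powersetCard k univ, p.2 * (nGroundOn p.1 ω s : ℝ)).sum :=
        List.sum_map_eq_sum_filter_beq _ (fun p : Formula V × ℝ => p.1.arity)
          (fun p k => ∑ s ∈ powersetCard k univ, p.2 * (nGroundOn p.1 ω s : ℝ)) S hS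
    _ = _ := by simp only [List.sum_map_finset_sum]

theorem weight_restrict_eq_prod (Φ : MLN V) (S : Finset ℕ)
    (hS : ∀ p ∈ Φ.formulas, p.1.arity ∈ S) {j : ℕ} (f : Fin j ↪o Fin N)
    (ω : Interp V (Fin N)) :
    weight Φ (restrict f ω) =
      ∏ k ∈ S, ∏ s ∈ powersetCard k (univ.map f.toEmbedding), subsetWeight Φ k ω s := by
  rw [weight_eq_prod_subsetWeight Φ S hS]
  refine prod_congr rfl fun k _ => ?_
  rw [powersetCard_map, prod_map]
  exact prod_congr rfl fun t _ => subsetWeight_restrict Φ k f ω t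

end Subsets

section Crossing

def crossingSubsets (n m k : ℕ) : Finset (Finset (Fin (n + m))) :=
  powersetCard k univ \ (powersetCard k (univ.map (Fin.castAddOrderEmb m).toEmbedding) ∪
    powersetCard k (univ.map (Fin.natAddOrderEmb n).toEmbedding))

variable {n m k : ℕ}

theorem disjoint_powersetCard_castAdd_natAdd (hk : 1 ≤ k) :
    Disjoint (powersetCard k (univ.map (Fin.castAddOrderEmb (n := n) m).toEmbedding))
      (powersetCard k (univ.map (Fin.natAddOrderEmb (m := m) n).toEmbedding)) := by
  refine disjoint_left.2 fun s hL hR => ?_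
  rw [mem_powersetCard] at hL hR
  obtain ⟨x, hx⟩ := card_pos.1 (hL.2.symm ▸ hk : 0 < s.card)
  obtain ⟨i, -, hi⟩ := mem_map.1 (hL.1 hx)
  obtain ⟨l, -, hl⟩ := mem_map.1 (hR.1 hx)
  have : (x : ℕ) = i ∧ (x : ℕ) = n + l := ⟨congrArg Fin.val hi.symm, congrArg Fin.val hl.symm⟩
  omega

theorem card_crossingSubsets (hk : 1 ≤ k) : #(crossingSubsets n m k) = exponent n m k := by
  rw [crossingSubsets, card_sdiff_of_subset (union_subset (powersetCard_mono (subset_univ _))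
      (powersetCard_mono (subset_univ _))),
    card_union_of_disjoint (disjoint_powersetCard_castAdd_natAdd hk)]
  simp [exponent, Nat.sub_sub]

theorem card_of_mem_crossingSubsets {s : Finset (Fin (n + m))}
    (hs : s ∈ crossingSubsets n m k) : s.card = k :=
  (mem_powersetCard.1 (mem_sdiff.1 hs).1).2

theorem prod_powersetCard_univ_eq_mul_prod_crossing {M : Type*} [CommMonoid M] (hk : 1 ≤ k)
    (g : Finset (Fin (n + m)) → M) :
    ∏ s ∈ powersetCard k univ, g s =
      (∏ s ∈ powersetCard k (univ.map (Fin.castAddOrderEmb m).toEmbedding), g s) *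
      (∏ s ∈ powersetCard k (univ.map (Fin.natAddOrderEmb n).toEmbedding), g s) *
      ∏ s ∈ crossingSubsets n m k, g s := by
  rw [crossingSubsets, ← prod_sdiff (union_subset (powersetCard_mono (subset_univ _))
      (powersetCard_mono (subset_univ _))),
    prod_union (disjoint_powersetCard_castAdd_natAdd hk), mul_comm]

end Crossing

theorem weight_eq_mul_prod_crossing (Φ : MLN V) (S : Finset ℕ) (hS0 : 0 ∉ S)
    (hS : ∀ p ∈ Φ.formulas, p.1.arity ∈ S) {n m : ℕ} (ω : Interp V (Fin (n + m))) :
    weight Φ ω = weight Φ (restrict (Fin.castAdd m) ω) * weight Φ (restrict (Fin.natAdd n) ω) *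
      ∏ k ∈ S, ∏ s ∈ crossingSubsets n m k, subsetWeight Φ k ω s := by
  have hL : weight Φ (restrict (Fin.castAdd m) ω) = _ :=
    weight_restrict_eq_prod Φ S hS (Fin.castAddOrderEmb m) ω
  have hR : weight Φ (restrict (Fin.natAdd n) ω) = _ :=
    weight_restrict_eq_prod Φ S hS (Fin.natAddOrderEmb n) ω
  rw [weight_eq_prod_subsetWeight Φ S hS, hL, hR, ← prod_mul_distrib, ← prod_mul_distrib]
  refine prod_congr rfl fun k hk => prod_powersetCard_univ_eq_mul_prod_crossing ?_ _
  exact Nat.one_le_iff_ne_zero.2 (ne_of_mem_of_not_mem hk hS0)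

section Bounds

variable (Φ : MLN V) (k : ℕ)

theorem wmin_le_kweight (ν : Interp V (Fin k)) : wmin Φ k ≤ kweight Φ k ν :=
  ciInf_le (Set.finite_range _).bddBelow ν

theorem kweight_le_wmax (ν : Interp V (Fin k)) : kweight Φ k ν ≤ wmax Φ k :=
  le_ciSup (Set.finite_range _).bddAbove ν

theorem wmin_pos : 0 < wmin Φ k := by
  have : Nonempty (Interp V (Fin k)) := ⟨fun _ _ => true⟩
  obtain ⟨ν, hν⟩ := Finite.exists_min (kweight Φ k)
  exact (Real.exp_pos _).trans_le (le_ciInf hν)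

variable {N : ℕ} {ω : Interp V (Fin N)} {s : Finset (Fin N)}

theorem wmin_le_subsetWeight (h : s.card = k) : wmin Φ k ≤ subsetWeight Φ k ω s := by
  rw [subsetWeight, dif_pos h]
  exact wmin_le_kweight Φ k _

theorem subsetWeight_le_wmax (h : s.card = k) : subsetWeight Φ k ω s ≤ wmax Φ k := by
  rw [subsetWeight, dif_pos h]
  exact kweight_le_wmax Φ k _

theorem subsetWeight_pos : 0 < subsetWeight Φ k ω s := by
  unfold subsetWeight
  split_ifs
  exacts [Real.exp_pos _, one_pos]

end Bounds

section CrossingBounds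

variable (Φ : MLN V) {n m k : ℕ}

theorem pow_exponent_wmin_le_prod_crossing (hk : 1 ≤ k) (ω : Interp V (Fin (n + m))) :
    wmin Φ k ^ exponent n m k ≤ ∏ s ∈ crossingSubsets n m k, subsetWeight Φ k ω s := by
  rw [← card_crossingSubsets hk, ← prod_const]
  exact prod_le_prod (fun _ _ => (wmin_pos Φ k).le) fun s hs =>
    wmin_le_subsetWeight Φ k (card_of_mem_crossingSubsets hs)

theorem prod_crossing_le_pow_exponent_wmax (hk : 1 ≤ k) (ω : Interp V (Fin (n + m))) :
    ∏ s ∈ crossingSubsets n m k, subsetWeight Φ k ω s ≤ wmax Φ k ^ exponent n m k := by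
  rw [← card_crossingSubsets hk, ← prod_const]
  exact prod_le_prod (fun _ _ => (subsetWeight_pos Φ k).le) fun s hs =>
    subsetWeight_le_wmax Φ k (card_of_mem_crossingSubsets hs)

end CrossingBounds

/-- sandwich bounds on the weight of an interpretation over [n+m]
in terms of the two marginal weights and the extremal k-weights. -/
theorem weight_sandwich {V : Vocab} (Φ : MLN V) (d n m : ℕ)
    (hd : ∀ p ∈ Φ.formulas, 1 ≤ p.1.arity ∧ p.1.arity ≤ d)
    (ω : Interp V (Fin (n + m))) :
    weight Φ (restrict (Fin.castAdd m) ω) * weight Φ (restrict (Fin.natAdd n) ω) *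
        ∏ k ∈ Finset.Icc 1 d, (wmin Φ k) ^ (exponent n m k)
      ≤ weight Φ ω ∧
    weight Φ ω ≤
      weight Φ (restrict (Fin.castAdd m) ω) * weight Φ (restrict (Fin.natAdd n) ω) *
        ∏ k ∈ Finset.Icc 1 d, (wmax Φ k) ^ (exponent n m k) := by
  have hpos : 0 ≤ weight Φ (restrict (Fin.castAdd m) ω) * weight Φ (restrict (Fin.natAdd n) ω) :=
    (mul_pos (Real.exp_pos _) (Real.exp_pos _)).le
  rw [weight_eq_mul_prod_crossing Φ (Icc 1 d) (by simp) (fun p hp => mem_Icc.2 (hd p hp)) ω]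
  constructor
  · gcongr with k hk
    · exact fun k _ => pow_nonneg (wmin_pos Φ k).le _
    · exact pow_exponent_wmin_le_prod_crossing Φ (mem_Icc.1 hk).1 ω
  · gcongr with k hk
    · exact fun k _ => prod_nonneg fun s _ => (subsetWeight_pos Φ k).le
    · exact prod_crossing_le_pow_exponent_wmax Φ (mem_Icc.1 hk).1 ω
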